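/- Suppose there exists b > 0 such that the single-interface initial data u(0) ∈ X_1 satisfy p_j(0) ≤ γ_j := p_* + b·max{1-j, 0} for all j ∈ ℤ. Then the unique single-interface solution satisfies p_j(t) ≤ γ_{j-k+1} for all j ∈ ℤ and all t ∈ [t_{k-1}^*, t_k^*), for every k ≥ 1. -/

import Mathlib

open MeasureTheory Filter Set
open scoped Classical Topology NNReal

noncomputable section

/-- Forward difference on ℤ. -/
def fd (v : ℤ → ℝ) (j : ℤ) : ℝ := v (j + 1) - v j

/-- Discrete Laplacian on ℤ. -/
def lap (v : ℤ → ℝ) (j : ℤ) : ℝ := v (j + 1) + v (j - 1) - 2 * v j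

def uStar (κ : ℝ) : ℝ := 1 / (1 + κ)

def pStar (κ : ℝ) : ℝ := κ / (1 + κ)

def uStarStar (κ : ℝ) : ℝ := (1 + 2 * κ) / (1 + κ)

/-- The trilinear constitutive function Φ'. -/
def Phi' (κ u : ℝ) : ℝ :=
  if u ≤ -uStar κ then u + 1
  else if uStar κ ≤ u then u - 1
  else -κ * u

/-- The double-well energy Φ. -/
def Phi (κ u : ℝ) : ℝ :=
  if u ≤ -uStar κ then (u + 1) ^ 2 / 2
  else if uStar κ ≤ u then (u - 1) ^ 2 / 2
  else (pStar κ - κ * u ^ 2) / 2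

/-- The single-interface state space X_k. -/
def memX (κ : ℝ) (k : ℤ) (u : ℤ → ℝ) : Prop :=
  (∃ c, uStar κ < c ∧ ∀ j, j < k → c ≤ u j) ∧
  (∃ C, ∀ j, j < k → u j ≤ C) ∧
  (∃ c, -uStarStar κ < c ∧ ∀ j, k < j → c ≤ u j) ∧
  (∃ C, C < -uStar κ ∧ ∀ j, k < j → u j ≤ C) ∧
  -uStarStar κ < u k ∧ u k < uStar κ

/-- `u` is a bounded (ℓ^∞-valued) solution of the lattice ODE u̇_j = Δ Φ'(u_j) for t ≥ 0. -/
def LatticeSol (κ : ℝ) (u : ℝ → ℤ → ℝ) : Prop :=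
  (∀ t : ℝ, 0 ≤ t → ∀ j : ℤ,
      HasDerivAt (fun s => u s j) (lap (fun i => Phi' κ (u t i)) j) t) ∧
  (∀ t : ℝ, 0 ≤ t → ∃ C : ℝ, ∀ j : ℤ, |u t j| ≤ C)

/-- A single-interface solution with phase transition times `tstar` (with `tstar 0 = 0`);
the value `⊤ : WithTop ℝ` encodes `∞`. -/
structure IsSIS (κ : ℝ) (u : ℝ → ℤ → ℝ) (tstar : ℕ → WithTop ℝ) : Prop where
  sol : LatticeSol κ u
  t0 : tstar 0 = 0
  pos : ∀ k : ℕ, 1 ≤ k → 0 < tstar k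
  mono : Monotone tstar
  step : ∀ k : ℕ, 1 ≤ k → tstar k = ⊤ ∨ tstar k < tstar (k + 1)
  phase : ∀ k : ℕ, 1 ≤ k → tstar (k - 1) ≠ ⊤ →
    ∀ t : ℝ, tstar (k - 1) < (t : WithTop ℝ) → (t : WithTop ℝ) < tstar k →
      memX κ (k : ℤ) (u t)

/-- The real value of a finite phase transition time (junk value `0` for `⊤`). -/
def tkr (tstar : ℕ → WithTop ℝ) (k : ℕ) : ℝ := (tstar k).untopD 0

/-- First spinodal entrance time t_k^#. -/
def tsharp (κ : ℝ) (u : ℝ → ℤ → ℝ) (tstar : ℕ → WithTop ℝ) (k : ℕ) : ℝ :=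
  sInf {t : ℝ | tstar (k - 1) < (t : WithTop ℝ) ∧ -uStar κ < u t (k : ℤ)}

/-- Final spinodal entrance time t_k^♭. -/
def tflat (κ : ℝ) (u : ℝ → ℤ → ℝ) (tstar : ℕ → WithTop ℝ) (k : ℕ) : ℝ :=
  sInf {t : ℝ | tsharp κ u tstar k ≤ t ∧ ∀ s : ℝ, t < s → -uStar κ < u s (k : ℤ)}

/-- The discrete heat kernel on ℤ. -/
def IsHeatKernel (g : ℝ → ℤ → ℝ) : Prop :=
  (∀ j : ℤ, g 0 j = if j = 0 then 1 else 0) ∧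
  (∀ t : ℝ, ∀ j : ℤ, HasDerivAt (fun s => g s j) (lap (g t) j) t) ∧
  (∀ t : ℝ, 0 ≤ t → Summable fun j : ℤ => |g t j|)

/-- The diffusive part q^{(k)}. -/
def qf (κ : ℝ) (u : ℝ → ℤ → ℝ) (tstar : ℕ → WithTop ℝ) (g : ℝ → ℤ → ℝ)
    (k : ℕ) (t : ℝ) (j : ℤ) : ℝ :=
  if t < tsharp κ u tstar k then 0
  else ∑' n : ℤ, g (t - tsharp κ u tstar k) (j - n) * Phi' κ (u (tsharp κ u tstar k) n)

/-- The k-th spinodal fluctuation r^{(k)}. -/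
def rf (κ : ℝ) (u : ℝ → ℤ → ℝ) (tstar : ℕ → WithTop ℝ) (g : ℝ → ℤ → ℝ)
    (k : ℕ) (t : ℝ) (j : ℤ) : ℝ :=
  if t ≤ tsharp κ u tstar k then 0
  else if (t : WithTop ℝ) ≤ tstar k then -Phi' κ (u t j) + qf κ u tstar g k t j
  else ∑' n : ℤ, g (t - tkr tstar k) (j - n) *
        (-Phi' κ (u (tkr tstar k) n) + qf κ u tstar g k (tkr tstar k) n)

/-- The quantity D_k. -/
def Dk (κ : ℝ) (u : ℝ → ℤ → ℝ) (tstar : ℕ → WithTop ℝ) (g : ℝ → ℤ → ℝ) (k : ℕ) : ℝ :=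
  ∫ s in (tsharp κ u tstar k)..(tkr tstar k),
    |deriv (fun r => qf κ u tstar g k r (k : ℤ)) s|

/-- The universal impact profile ϱ. -/
def rho (κ : ℝ) (j : ℤ) : ℝ := 2 * pStar κ / (1 + 2 * κ) ^ j.natAbs

/-- The essential fluctuation r_ess^{(k)}. -/
def ress (κ : ℝ) (tstar : ℕ → WithTop ℝ) (g : ℝ → ℤ → ℝ) (k : ℕ) (t : ℝ) (j : ℤ) : ℝ :=
  if tstar k ≤ (t : WithTop ℝ) then
    ∑' n : ℤ, g (t - tkr tstar k) (j - n) * rho κ (n - (k : ℤ))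
  else 0

/-- The negligible fluctuation r_¬^{(k)}. -/
def rneg (κ : ℝ) (u : ℝ → ℤ → ℝ) (tstar : ℕ → WithTop ℝ) (g : ℝ → ℤ → ℝ)
    (k : ℕ) (t : ℝ) (j : ℤ) : ℝ :=
  rf κ u tstar g k t j - ress κ tstar g k t j

/-- The residual fluctuation r_res^{(k)} (with cut-off parameter d and scaling ε). -/
def rres (κ : ℝ) (tstar : ℕ → WithTop ℝ) (g : ℝ → ℤ → ℝ) (k : ℕ) (d ε : ℝ)
    (t : ℝ) (j : ℤ) : ℝ :=
  if tkr tstar k ≤ t ∧ t < tkr tstar k + d / ε then ress κ tstar g k t j else 0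

/-- The regular fluctuation r_reg^{(k)} (with cut-off parameter d, scaling ε, final time tfin). -/
def rreg (κ : ℝ) (tstar : ℕ → WithTop ℝ) (g : ℝ → ℤ → ℝ) (k : ℕ) (d ε tfin : ℝ)
    (t : ℝ) (j : ℤ) : ℝ :=
  if tkr tstar k + d / ε ≤ t ∧ t < tfin then ress κ tstar g k t j else 0

/-- Macroscopic single-interface initial data with scaling parameter ε. -/
def MacroData (κ ε α β : ℝ) (u0 : ℤ → ℝ) : Prop :=
  memX κ 1 u0 ∧
  ¬(-uStar κ < u0 1 ∧ u0 1 < uStar κ) ∧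
  (∀ j : ℤ, |Phi' κ (u0 j)| ≤ α) ∧
  (∀ j : ℤ, |Phi' κ (u0 (j + 1)) - Phi' κ (u0 j)| ≤ α * ε) ∧
  (∀ j : ℤ, j ≠ 1 → |lap (fun i => Phi' κ (u0 i)) j| ≤ α * ε ^ 2) ∧
  |lap (fun i => Phi' κ (u0 i)) 1| ≤ β * ε ∧
  (∀ j : ℤ, Phi' κ (u0 j) ≤ pStar κ + ε * β * max 0 (1 - (j : ℝ)))

/-- The number K_ε of phase transitions before the microscopic time tfin. -/
def Keps (tstar : ℕ → WithTop ℝ) (tfin : ℝ) : ℕ :=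
  sSup {k : ℕ | 1 ≤ k ∧ tstar k ≤ (tfin : WithTop ℝ)}

/-- The lattice index j_ξ determined by ξ = ε (j_ξ + ζ) with ζ ∈ (-1/2, 1/2]. -/
def jIdx (ε ξ : ℝ) : ℤ := ⌈ξ / ε - 1 / 2⌉

/-- The piecewise constant macroscopic field P_ε. -/
def Pf (κ : ℝ) (u : ℝ → ℤ → ℝ) (ε τ ξ : ℝ) : ℝ := Phi' κ (u (τ / ε ^ 2) (jIdx ε ξ))

/-- The piecewise constant macroscopic field U_ε. -/
def Uf (u : ℝ → ℤ → ℝ) (ε τ ξ : ℝ) : ℝ := u (τ / ε ^ 2) (jIdx ε ξ)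

/-- The discrete interface curve Ξ_ε^*. -/
def XiStar (tstar : ℕ → WithTop ℝ) (ε τ : ℝ) : ℝ :=
  ε * ((sInf {k : ℕ | 1 ≤ k ∧ ((τ / ε ^ 2 : ℝ) : WithTop ℝ) < tstar k} : ℕ) : ℝ)

/-- The discrete interface curve Ξ_ε^#. -/
def XiSharp (κ : ℝ) (u : ℝ → ℤ → ℝ) (tstar : ℕ → WithTop ℝ) (ε τ : ℝ) : ℝ :=
  ε * ((sInf {k : ℕ | 1 ≤ k ∧ τ / ε ^ 2 < tsharp κ u tstar k} : ℕ) : ℝ)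

/-- The approximate macroscopic phase field M_ε. -/
def Mf (κ : ℝ) (u : ℝ → ℤ → ℝ) (tstar : ℕ → WithTop ℝ) (ε τ ξ : ℝ) : ℝ :=
  if XiSharp κ u tstar ε τ < ξ then -1
  else if ξ < XiStar tstar ε τ then 1
  else 0

/-- The scaled forward difference ∇_{+ε} P_ε. -/
def gradP (κ : ℝ) (u : ℝ → ℤ → ℝ) (ε τ ξ : ℝ) : ℝ :=
  (Phi' κ (u (τ / ε ^ 2) (jIdx ε ξ + 1)) - Phi' κ (u (τ / ε ^ 2) (jIdx ε ξ))) / ε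

/-!
Behind the interface (`j < k`) one has `p_j = u_j - 1`, so `p` solves the discrete heat equation
there, and so does the kink `γ`, which is affine for `j ≤ k`. At and beyond the interface
`p ≤ p_* = γ`, and far behind it `γ` dominates `p`, since `γ` grows linearly while `p` is bounded
uniformly on compact time intervals (a backward Gronwall estimate, using `p ≥ -p_*`). The maximum
principle on a finite window therefore propagates `p ≤ γ` through each phase, and continuity
carries the bound across the transition time `t_k^*`, where the corner of `γ` moves one site on.
-/

section

variable {κ x : ℝ}

lemma uStar_pos (hκ : 0 < κ) : 0 < uStar κ := by
  unfold uStar; positivity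

lemma pStar_nonneg (hκ : 0 < κ) : 0 ≤ pStar κ := by
  unfold pStar; positivity

lemma mul_uStar (hκ : 0 < κ) : κ * uStar κ = pStar κ := by
  unfold uStar pStar; field_simp

lemma uStar_add_pStar (hκ : 0 < κ) : uStar κ + pStar κ = 1 := by
  unfold uStar pStar; field_simp

lemma uStarStar_eq (hκ : 0 < κ) : uStarStar κ = 1 + pStar κ := by
  unfold uStarStar pStar; field_simp; ring

lemma phi'_of_uStar_le (hκ : 0 < κ) (hx : uStar κ ≤ x) : Phi' κ x = x - 1 := by
  have := uStar_pos hκ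
  rw [Phi', if_neg (by linarith), if_pos hx]

lemma neg_pStar_le_phi' (hκ : 0 < κ) (hx : -uStarStar κ ≤ x) : -pStar κ ≤ Phi' κ x := by
  have h1 := uStar_add_pStar hκ
  have h2 := mul_uStar hκ
  have h3 := uStarStar_eq hκ
  unfold Phi'
  split_ifs with hl hr
  · linarith
  · linarith
  · nlinarith

lemma phi'_le_pStar (hκ : 0 < κ) (hx : x < uStar κ) : Phi' κ x ≤ pStar κ := by
  have h1 := uStar_add_pStar hκ
  have h2 := mul_uStar hκ
  unfold Phi'
  split_ifs with hl hr
  · linarith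
  · linarith
  · nlinarith

lemma phi'_eq_max_min (hκ : 0 < κ) (x : ℝ) :
    Phi' κ x = max (x - 1) (min (x + 1) (-(κ * x))) := by
  have h1 := uStar_add_pStar hκ
  have h2 := mul_uStar hκ
  have h3 := uStar_pos hκ
  unfold Phi'
  split_ifs with hl hr
  · rw [min_eq_left (by nlinarith), max_eq_right (by linarith)]
  · rw [min_eq_right (by nlinarith), max_eq_left (by nlinarith)]
  · rw [min_eq_right (by nlinarith), max_eq_right (by nlinarith)]; ring

lemma continuous_phi' (hκ : 0 < κ) : Continuous (Phi' κ) := by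
  rw [funext (phi'_eq_max_min hκ)]; fun_prop

lemma HasDerivAt.phi'_of_uStar_lt (hκ : 0 < κ) {f : ℝ → ℝ} {f' s : ℝ}
    (hf : HasDerivAt f f' s) (hs : uStar κ < f s) :
    HasDerivAt (fun r => Phi' κ (f r)) f' s := by
  refine (hf.sub_const 1).congr_of_eventuallyEq ?_
  filter_upwards [hf.continuousAt.eventually (lt_mem_nhds hs)] with r hr
  exact phi'_of_uStar_le hκ hr.le

section memX

variable {k j : ℤ} {v : ℤ → ℝ}

lemma memX.uStar_lt (hv : memX κ k v) (hj : j < k) : uStar κ < v j := by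
  obtain ⟨⟨c, hc, hcv⟩, -⟩ := hv
  exact hc.trans_le (hcv j hj)

lemma memX.neg_pStar_le_phi' (hκ : 0 < κ) (hv : memX κ k v) (j : ℤ) :
    -pStar κ ≤ Phi' κ (v j) := by
  refine _root_.neg_pStar_le_phi' hκ ?_
  have h1 := uStar_pos hκ
  have h2 : 0 < uStarStar κ := by rw [uStarStar_eq hκ]; linarith [pStar_nonneg hκ]
  rcases lt_trichotomy j k with hj | rfl | hj
  · linarith [memX.uStar_lt hv hj]
  · exact hv.2.2.2.2.1.le
  · obtain ⟨-, -, ⟨c, hc, hcv⟩, -⟩ := hv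
    linarith [hcv j hj]

lemma memX.phi'_le_pStar (hκ : 0 < κ) (hv : memX κ k v) (hj : k ≤ j) :
    Phi' κ (v j) ≤ pStar κ := by
  refine _root_.phi'_le_pStar hκ ?_
  obtain ⟨-, -, -, ⟨C, hC, hCv⟩, -, hk⟩ := hv
  rcases hj.eq_or_lt with rfl | hj
  · exact hk
  · linarith [hCv j hj, uStar_pos hκ]

end memX

section DiscreteHeat

lemma lap_sub (v w : ℤ → ℝ) (j : ℤ) : lap (fun i => v i - w i) j = lap v j - lap w j := by
  simp only [lap]; ring

lemma HasDerivAt.nonneg_of_eventually_le_left {g : ℝ → ℝ} {d τ : ℝ}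
    (hg : HasDerivAt g d τ) (hle : ∀ᶠ s in 𝓝[<] τ, g s ≤ g τ) : 0 ≤ d := by
  refine ge_of_tendsto (hasDerivAt_iff_tendsto_slope_left_right.1 hg).1 ?_
  filter_upwards [hle, self_mem_nhdsWithin] with s hs hsτ
  rw [slope_def_field]
  exact div_nonneg_of_nonpos (by linarith) (by linarith [show s < τ from hsτ])

theorem nonpos_of_hasDerivAt_lap {w : ℝ → ℤ → ℝ} {a T : ℝ} {L R : ℤ}
    (hcont : ∀ i ∈ Icc L R, ContinuousOn (fun s => w s i) (Icc a T))
    (hderiv : ∀ i ∈ Icc L R, ∀ s ∈ Ioc a T, HasDerivAt (fun r => w r i) (lap (w s) i) s)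
    (hL : ∀ s ∈ Icc a T, w s (L - 1) ≤ 0) (hR : ∀ s ∈ Icc a T, w s (R + 1) ≤ 0)
    (h0 : ∀ i ∈ Icc L R, w a i ≤ 0) {s : ℝ} (hs : s ∈ Icc a T) {i : ℤ} (hi : i ∈ Icc L R) :
    w s i ≤ 0 := by
  -- `ε (1 + s - a)` is a strict supersolution, so `w` cannot touch it from below.
  suffices key : ∀ ε > 0, ∀ s ∈ Icc a T, ∀ i ∈ Icc L R, w s i < ε * (1 + (s - a)) by
    refine le_of_forall_pos_lt_add fun ε hε => ?_
    have hpos : 0 < 1 + (s - a) := by linarith [hs.1]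
    simpa [div_mul_cancel₀ _ hpos.ne'] using key (ε / (1 + (s - a))) (by positivity) s hs i hi
  intro ε hε
  by_contra! hhit
  obtain ⟨s₀, hs₀, i₀, hi₀, hw₀⟩ := hhit
  set A := ⋃ i ∈ Icc L R, Icc a T ∩ (fun s => w s i - ε * (1 + (s - a))) ⁻¹' Ici 0
  have hA : IsCompact A := by
    refine isCompact_Icc.of_isClosed_subset ?_ (iUnion₂_subset fun _ _ => inter_subset_left)
    refine (finite_Icc L R).isClosed_biUnion fun i hi => ?_
    exact ((hcont i hi).sub (by fun_prop)).preimage_isClosed_of_isClosed isClosed_Icc isClosed_Ici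
  obtain ⟨τ, hτA, hτmin⟩ := hA.exists_isLeast ⟨s₀, mem_biUnion hi₀ ⟨hs₀, by simpa using hw₀⟩⟩
  obtain ⟨i, hi, hτ, hwi⟩ := mem_iUnion₂.1 hτA
  simp only [mem_preimage, mem_Ici, sub_nonneg] at hwi
  have haτ : a < τ := by
    refine hτ.1.lt_of_ne ?_
    rintro rfl
    linarith [h0 i hi]
  have hbefore : ∀ s ∈ Ico a τ, ∀ i ∈ Icc L R, w s i < ε * (1 + (s - a)) := by
    intro s hs i hi
    by_contra! hw
    exact (hτmin (mem_biUnion hi ⟨⟨hs.1, hs.2.le.trans hτ.2⟩, by simpa using hw⟩)).not_gt hs.2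
  have hat : ∀ j ∈ Icc L R, w τ j ≤ ε * (1 + (τ - a)) := by
    intro j hj
    refine ContinuousWithinAt.closure_le (s := Ico a τ) ?_ ?_ (by fun_prop)
      fun s hs => (hbefore s hs j hj).le
    · rw [closure_Ico haτ.ne]; exact right_mem_Icc.2 haτ.le
    · exact (hcont j hj τ hτ).mono (Ico_subset_Icc_self.trans (Icc_subset_Icc_right hτ.2))
  have hneighbor : ∀ j ∈ Icc (L - 1) (R + 1), w τ j ≤ ε * (1 + (τ - a)) := by
    have hβ : 0 ≤ ε * (1 + (τ - a)) := mul_nonneg hε.le (by linarith [hτ.1])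
    intro j ⟨hLj, hjR⟩
    by_cases hj₁ : j = L - 1
    · subst hj₁; linarith [hL τ hτ]
    by_cases hj₂ : j = R + 1
    · subst hj₂; linarith [hR τ hτ]
    exact hat j ⟨by omega, by omega⟩
  have hlap : lap (w τ) i ≤ 0 := by
    obtain ⟨hiL, hiR⟩ := hi
    have h₁ := hneighbor (i + 1) ⟨by omega, by omega⟩
    have h₂ := hneighbor (i - 1) ⟨by omega, by omega⟩
    simp only [lap]; linarith
  have hβ : HasDerivAt (fun s => ε * (1 + (s - a))) ε τ := by
    simpa using (((hasDerivAt_id τ).sub_const a).const_add 1).const_mul ε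
  have hgrow : 0 ≤ lap (w τ) i - ε := by
    refine ((hderiv i hi τ ⟨haτ, hτ.2⟩).sub hβ).nonneg_of_eventually_le_left ?_
    filter_upwards [Ioo_mem_nhdsLT haτ] with s hs
    simp only [Pi.sub_apply]
    linarith [hbefore s (Ioo_subset_Ico_self hs) i hi]
  linarith

theorem add_le_exp_mul_of_hasDerivAt_lap {P : ℝ → ℤ → ℝ} {a T c : ℝ} {j : ℤ}
    (hderiv : ∀ s ∈ Ioc a T, HasDerivAt (fun r => P r j) (lap (P s) j) s)
    (hlow : ∀ s ∈ Ioc a T, ∀ i, -c ≤ P s i) {s : ℝ} (hs : s ∈ Ioc a T) :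
    P s j + c ≤ Real.exp (2 * (T - s)) * (P T j + c) := by
  -- `f` is nondecreasing because `Δ P_j + 2 (P_j + c) = (P_{j+1} + c) + (P_{j-1} + c) ≥ 0`.
  set f := fun r => Real.exp (2 * r) * (P r j + c)
  have hsub : Icc s T ⊆ Ioc a T := Icc_subset_Ioc_iff hs.2 |>.2 ⟨hs.1, le_rfl⟩
  have hf : ∀ r ∈ Icc s T, HasDerivAt f
      (Real.exp (2 * r) * (P r (j + 1) + c + (P r (j - 1) + c))) r := by
    intro r hr
    have hexp : HasDerivAt (fun r => Real.exp (2 * r)) (Real.exp (2 * r) * 2) r := by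
      simpa using ((hasDerivAt_id r).const_mul 2).exp
    refine (hexp.mul ((hderiv r (hsub hr)).add_const c)).congr_deriv ?_
    simp only [lap]
    ring
  have hmono : MonotoneOn f (Icc s T) := by
    refine monotoneOn_of_hasDerivWithinAt_nonneg (convex_Icc s T)
      (fun r hr => (hf r hr).continuousAt.continuousWithinAt)
      (fun r hr => (hf r (interior_subset hr)).hasDerivWithinAt) fun r hr => ?_
    have hr' := hsub (interior_subset hr)
    exact mul_nonneg (Real.exp_pos _).le (by linarith [hlow r hr' (j + 1), hlow r hr' (j - 1)])
  have hfs : Real.exp (2 * s) * (P s j + c) ≤ Real.exp (2 * T) * (P T j + c) :=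
    hmono (left_mem_Icc.2 hs.2) (right_mem_Icc.2 hs.2) hs.2
  have hexp : Real.exp (2 * T) = Real.exp (2 * s) * Real.exp (2 * (T - s)) := by
    rw [← Real.exp_add]; ring_nf
  rw [hexp, mul_assoc] at hfs
  exact le_of_mul_le_mul_left hfs (Real.exp_pos _)

end DiscreteHeat

/-- `kink κ b k j` is the paper's `γ_{j-k+1}`, the majorant while the interface sits at `k`. -/
def kink (κ b : ℝ) (k j : ℤ) : ℝ := pStar κ + b * max ((k : ℝ) - j) 0

section Kink

variable {b : ℝ} {k j : ℤ}

lemma kink_of_le (h : k ≤ j) : kink κ b k j = pStar κ := by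
  have : (k : ℝ) ≤ j := by exact_mod_cast h
  simp [kink, max_eq_right (sub_nonpos.2 this)]

lemma lap_kink (h : j < k) : lap (kink κ b k) j = 0 := by
  have : (j : ℝ) + 1 ≤ k := by exact_mod_cast h
  simp only [lap, kink]
  push_cast
  rw [max_eq_left (by linarith), max_eq_left (by linarith), max_eq_left (by linarith)]
  ring

lemma kink_mono (hb : 0 ≤ b) {k' : ℤ} (h : k ≤ k') : kink κ b k j ≤ kink κ b k' j := by
  have : (k : ℝ) ≤ k' := by exact_mod_cast h
  unfold kink
  gcongr

end Kink

section LatticeSol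

variable {u : ℝ → ℤ → ℝ} {k : ℤ} {a t : ℝ}

lemma LatticeSol.continuousAt_phi' (hκ : 0 < κ) (hsol : LatticeSol κ u) (ht : 0 ≤ t) (j : ℤ) :
    ContinuousAt (fun s => Phi' κ (u s j)) t :=
  (continuous_phi' hκ).continuousAt.comp (hsol.1 t ht j).continuousAt

lemma LatticeSol.hasDerivAt_phi' (hκ : 0 < κ) (hsol : LatticeSol κ u) (ht : 0 ≤ t)
    (hX : memX κ k (u t)) {j : ℤ} (hj : j < k) :
    HasDerivAt (fun s => Phi' κ (u s j)) (lap (fun i => Phi' κ (u t i)) j) t :=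
  (hsol.1 t ht j).phi'_of_uStar_lt hκ (memX.uStar_lt hX hj)

/-- `u(s)` is only known to be bounded for each fixed `s`; the bound at time `t` is transported
backwards in time. -/
lemma LatticeSol.exists_phi'_add_pStar_le (hκ : 0 < κ) (hsol : LatticeSol κ u) (ha : 0 ≤ a)
    (hat : a < t) (hX : ∀ s ∈ Ioc a t, memX κ k (u s)) :
    ∃ M, ∀ s ∈ Ioc a t, ∀ i < k, Phi' κ (u s i) + pStar κ ≤ M := by
  obtain ⟨C, hC⟩ := hsol.2 t (ha.trans hat.le)
  refine ⟨Real.exp (2 * (t - a)) * (C + pStar κ), fun s hs i hi => ?_⟩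
  have hXt := hX t ⟨hat, le_rfl⟩
  have hgrowth := add_le_exp_mul_of_hasDerivAt_lap (P := fun s i => Phi' κ (u s i))
    (fun s hs => hsol.hasDerivAt_phi' hκ (ha.trans hs.1.le) (hX s hs) hi)
    (fun s hs => memX.neg_pStar_le_phi' hκ (hX s hs)) hs
  have hPt : Phi' κ (u t i) ≤ C := by
    rw [phi'_of_uStar_le hκ (memX.uStar_lt hXt hi).le]
    linarith [le_abs_self (u t i), hC i]
  calc Phi' κ (u s i) + pStar κ ≤ Real.exp (2 * (t - s)) * (Phi' κ (u t i) + pStar κ) := hgrowth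
    _ ≤ Real.exp (2 * (t - a)) * (C + pStar κ) := by
      gcongr
      · linarith [memX.neg_pStar_le_phi' hκ hXt i]
      · exact hs.1.le

theorem LatticeSol.phi'_le_kink (hκ : 0 < κ) {b : ℝ} (hb : 0 < b) (hsol : LatticeSol κ u)
    (ha : 0 ≤ a) (hat : a ≤ t) (hX : ∀ s ∈ Ioc a t, memX κ k (u s))
    (hstart : ∀ j, Phi' κ (u a j) ≤ kink κ b k j) (j : ℤ) :
    Phi' κ (u t j) ≤ kink κ b k j := by
  rcases hat.eq_or_lt with rfl | hat
  · exact hstart j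
  rcases le_or_gt k j with hkj | hjk
  · rw [kink_of_le hkj]; exact memX.phi'_le_pStar hκ (hX t ⟨hat, le_rfl⟩) hkj
  obtain ⟨M, hM⟩ := hsol.exists_phi'_add_pStar_le hκ ha hat hX
  obtain ⟨n, hn⟩ := exists_nat_ge (M / b)
  have hbn : M ≤ b * n := by rwa [div_le_iff₀' hb] at hn
  have hp := pStar_nonneg hκ
  have hfar : ∀ s ∈ Ioc a t, ∀ i ≤ k - n - 1, Phi' κ (u s i) ≤ kink κ b k i := by
    intro s hs i hi
    have hi' : (i : ℝ) ≤ k - n - 1 := by exact_mod_cast hi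
    have := hM s hs i (by omega)
    have : b * (n + 1) ≤ b * max ((k : ℝ) - i) 0 :=
      mul_le_mul_of_nonneg_left (le_max_of_le_left (by linarith)) hb.le
    unfold kink; nlinarith
  have hextend : ∀ i, (∀ s ∈ Ioc a t, Phi' κ (u s i) ≤ kink κ b k i) →
      ∀ s ∈ Icc a t, Phi' κ (u s i) - kink κ b k i ≤ 0 := by
    intro i hi s hs
    rcases hs.1.eq_or_lt with rfl | has
    · linarith [hstart i]
    · linarith [hi s ⟨has, hs.2⟩]
  refine sub_nonpos.1 <| nonpos_of_hasDerivAt_lap (w := fun s i => Phi' κ (u s i) - kink κ b k i)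
    (L := min j (k - n)) (R := k - 1) (fun i _ => ?_) (fun i hi s hs => ?_) ?_ ?_
    (fun i _ => sub_nonpos.2 (hstart i)) ⟨hat.le, le_rfl⟩ ⟨min_le_left _ _, by omega⟩
  · exact fun s hs => ((hsol.continuousAt_phi' hκ (ha.trans hs.1) i).sub
      continuousAt_const).continuousWithinAt
  · have hik : i < k := Int.lt_of_le_sub_one hi.2
    refine ((hsol.hasDerivAt_phi' hκ (ha.trans hs.1.le) (hX s hs) hik).sub_const _).congr_deriv ?_
    rw [lap_sub, lap_kink hik, sub_zero]
  · exact hextend _ fun s hs => hfar s hs _ (by omega)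
  · rw [sub_add_cancel]
    exact hextend k fun s hs => (kink_of_le le_rfl).symm ▸
      memX.phi'_le_pStar hκ (hX s hs) le_rfl

end LatticeSol

section IsSIS

variable {u : ℝ → ℤ → ℝ} {tstar : ℕ → WithTop ℝ}

lemma IsSIS.nonneg_of_tstar_eq (h : IsSIS κ u tstar) {n : ℕ} {a : ℝ} (ha : tstar n = a) :
    0 ≤ a := by
  have := h.mono (Nat.zero_le n)
  rw [h.t0, ha] at this
  exact_mod_cast this

lemma IsSIS.lt_succ (h : IsSIS κ u tstar) {n : ℕ} (hn : tstar (n + 1) ≠ ⊤) :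
    tstar n < tstar (n + 1) := by
  rcases n with _ | n
  · exact h.t0 ▸ h.pos 1 le_rfl
  · exact (h.step (n + 1) (by omega)).resolve_left (ne_top_of_le_ne_top hn (h.mono (by omega)))

lemma IsSIS.memX_of_mem_Ioc (h : IsSIS κ u tstar) {n : ℕ} {a t : ℝ} (ha : tstar n = a)
    (ht : (t : WithTop ℝ) < tstar (n + 1)) : ∀ s ∈ Ioc a t, memX κ ↑(n + 1) (u s) := by
  intro s hs
  refine h.phase (n + 1) (by omega) (by simp [ha]) s (by simpa [ha] using hs.1) ?_
  exact lt_of_le_of_lt (by exact_mod_cast hs.2) ht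

theorem IsSIS.phi'_le_kink (hκ : 0 < κ) {b : ℝ} (hb : 0 < b) (h : IsSIS κ u tstar)
    (hp0 : ∀ j, Phi' κ (u 0 j) ≤ kink κ b 1 j) (n : ℕ) {t : ℝ} (ht₁ : tstar n ≤ t)
    (ht₂ : t < tstar (n + 1)) (j : ℤ) : Phi' κ (u t j) ≤ kink κ b ↑(n + 1) j := by
  induction n generalizing t j with
  | zero =>
    have h0 : tstar 0 = ((0 : ℝ) : WithTop ℝ) := h.t0
    exact h.sol.phi'_le_kink hκ hb le_rfl (by exact_mod_cast h0 ▸ ht₁)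
      (h.memX_of_mem_Ioc h0 ht₂) hp0 j
  | succ n ih =>
    obtain ⟨a, ha⟩ := WithTop.ne_top_iff_exists.1 (ne_top_of_le_ne_top WithTop.coe_ne_top ht₁)
    have hlt := h.lt_succ (n := n) (ha ▸ WithTop.coe_ne_top)
    obtain ⟨a₀, ha₀⟩ := WithTop.ne_top_iff_exists.1 (ne_top_of_lt hlt)
    rw [← ha, ← ha₀, WithTop.coe_lt_coe] at hlt
    have hstart : ∀ j, Phi' κ (u a j) ≤ kink κ b ↑(n + 1 + 1) j := by
      intro j
      refine le_trans ?_ (kink_mono (k := ↑(n + 1)) hb.le (by omega))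
      have hcont := h.sol.continuousAt_phi' hκ (h.nonneg_of_tstar_eq ha.symm) j
      refine le_of_tendsto (hcont.tendsto.mono_left (nhdsWithin_le_nhds (s := Iio a))) ?_
      filter_upwards [Ioo_mem_nhdsLT hlt] with s hs
      exact ih (ha₀ ▸ WithTop.coe_le_coe.2 hs.1.le) (ha ▸ WithTop.coe_lt_coe.2 hs.2) j
    exact h.sol.phi'_le_kink hκ hb (h.nonneg_of_tstar_eq ha.symm)
      (by exact_mod_cast ha ▸ ht₁) (h.memX_of_mem_Ioc ha.symm ht₂) hstart j

end IsSIS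

end

theorem stmt3_general (κ : ℝ) (hκ : 0 < κ) (u : ℝ → ℤ → ℝ) (tstar : ℕ → WithTop ℝ)
    (h : IsSIS κ u tstar) (b : ℝ) (hb : 0 < b)
    (hp0 : ∀ j : ℤ, Phi' κ (u 0 j) ≤ pStar κ + b * max (1 - (j : ℝ)) 0) :
    ∀ k : ℕ, 1 ≤ k → ∀ t : ℝ,
      tstar (k - 1) ≤ (t : WithTop ℝ) → (t : WithTop ℝ) < tstar k →
      ∀ j : ℤ, Phi' κ (u t j) ≤ pStar κ + b * max (1 - ((j : ℝ) - (k : ℝ) + 1)) 0 := by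
  intro k hk t ht₁ ht₂ j
  obtain ⟨n, rfl⟩ := Nat.exists_eq_add_of_le' hk
  have hbound := h.phi'_le_kink hκ hb (fun j => by simpa [kink] using hp0 j) n
    (by simpa using ht₁) ht₂ j
  unfold kink at hbound
  convert hbound using 4
  push_cast
  ring

/-- Waiting Lemma, majorant part: if p(0) lies below the kink γ then
p_j(t) ≤ γ_{j-k+1} on [t_{k-1}^*, t_k^*) for every k ≥ 1. -/
theorem stmt3 (κ : ℝ) (hκ : 0 < κ) (u : ℝ → ℤ → ℝ) (tstar : ℕ → WithTop ℝ)
    (h : IsSIS κ u tstar) (h0 : memX κ 1 (u 0)) (b : ℝ) (hb : 0 < b)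
    (hp0 : ∀ j : ℤ, Phi' κ (u 0 j) ≤ pStar κ + b * max (1 - (j : ℝ)) 0) :
    ∀ k : ℕ, 1 ≤ k → ∀ t : ℝ,
      tstar (k - 1) ≤ (t : WithTop ℝ) → (t : WithTop ℝ) < tstar k →
      ∀ j : ℤ, Phi' κ (u t j) ≤ pStar κ + b * max (1 - ((j : ℝ) - (k : ℝ) + 1)) 0 :=
  stmt3_general κ hκ u tstar h b hb hp0
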